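/- arXiv:1402.2900 — 4 statements merged into one kernel-verified Lean document; each statement's English description precedes it below -/
import Mathlib

section
/- Let f¹, f² : U → U be Lip(β) for some β ∈ (1,2], i.e. Fréchet differentiable with bounded derivative and (β−1)-Hölder derivative, with norms |f^i|_β. Then for all u₁,u₂,v₁,v₂ ∈ U: ‖f¹(u₁) − f¹(u₂) − (f²(v₁) − f²(v₂))‖ ≤ |f¹|_β ‖u₁ − u₂ − (v₁ − v₂)‖ + (‖u₁−u₂‖ + ‖v₁−v₂‖)^{β−1} (|f¹|_β ‖u₂ − v₂‖ + |f¹ − f²|_{β−1}). -/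
/-!
Split the left-hand side as the second difference `f¹u₁ − f¹u₂ − (f¹v₁ − f¹v₂)` plus the
increment of `f¹ − f²` between `v₁` and `v₂`; the latter is controlled by the Hölder bound
on `f¹ − f²`. For the former, apply the mean value inequality on `[0, 1]` to
`s ↦ f¹(u₁ + s(v₁ − u₁)) − f¹(u₂ + s(v₂ − u₂))`. Its derivative is `A w₁ − B w₂` with
`A, B` values of `Df¹` at two points at distance at most `‖u₁ − u₂‖ + ‖v₁ − v₂‖` and
`w_i = v_i − u_i`; writing it as `A (w₁ − w₂) + (A − B) w₂` bounds the first term by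
`‖Df¹‖_∞` and the second by the Hölder seminorm of `Df¹`.
-/

open Set

theorem ContinuousLinearMap.norm_apply_sub_apply_le
    {E F : Type*} [NormedAddCommGroup E] [NormedSpace ℝ E]
    [NormedAddCommGroup F] [NormedSpace ℝ F] (A B : E →L[ℝ] F) (x y : E) :
    ‖A x - B y‖ ≤ ‖A‖ * ‖x - y‖ + ‖A - B‖ * ‖y‖ := by
  have hsplit : A x - B y = A (x - y) + (A - B) y := by
    simp only [map_sub, _root_.sub_apply]
    abel
  rw [hsplit]
  exact (norm_add_le _ _).trans (add_le_add (A.le_opNorm _) ((A - B).le_opNorm _))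

section SecondDifference

variable {E F : Type*} [NormedAddCommGroup E] [NormedSpace ℝ E]
  [NormedAddCommGroup F] [NormedSpace ℝ F]

theorem norm_segment_sub_segment_le (u₁ u₂ v₁ v₂ : E) {s : ℝ} (hs : s ∈ Icc (0 : ℝ) 1) :
    ‖u₁ + s • (v₁ - u₁) - (u₂ + s • (v₂ - u₂))‖ ≤ ‖u₁ - u₂‖ + ‖v₁ - v₂‖ := by
  have hcombo : u₁ + s • (v₁ - u₁) - (u₂ + s • (v₂ - u₂))
      = (1 - s) • (u₁ - u₂) + s • (v₁ - v₂) := by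
    module
  rw [hcombo]
  calc ‖(1 - s) • (u₁ - u₂) + s • (v₁ - v₂)‖
      ≤ (1 - s) * ‖u₁ - u₂‖ + s * ‖v₁ - v₂‖ := by
        refine (norm_add_le _ _).trans_eq ?_
        rw [norm_smul, norm_smul, Real.norm_of_nonneg (by linarith [hs.2]),
          Real.norm_of_nonneg hs.1]
    _ ≤ ‖u₁ - u₂‖ + ‖v₁ - v₂‖ := by
        nlinarith [hs.1, hs.2, norm_nonneg (u₁ - u₂), norm_nonneg (v₁ - v₂)]

/-- Mean value inequality for `s ↦ f (u₁ + s • (v₁ - u₁)) - f (u₂ + s • (v₂ - u₂))`. -/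
theorem norm_second_difference_le_of_fderiv {f : E → F} (hf : Differentiable ℝ f)
    {u₁ u₂ v₁ v₂ : E} {C : ℝ}
    (hC : ∀ s ∈ Ico (0 : ℝ) 1, ‖fderiv ℝ f (u₁ + s • (v₁ - u₁)) (v₁ - u₁) -
      fderiv ℝ f (u₂ + s • (v₂ - u₂)) (v₂ - u₂)‖ ≤ C) :
    ‖f u₁ - f u₂ - (f v₁ - f v₂)‖ ≤ C := by
  set g : ℝ → F := fun s => f (u₁ + s • (v₁ - u₁)) - f (u₂ + s • (v₂ - u₂))
  have hline : ∀ (u v : E) (s : ℝ), HasDerivAt (fun t : ℝ => u + t • (v - u)) (v - u) s :=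
    fun u v s => by simpa using ((hasDerivAt_id s).smul_const (v - u)).const_add u
  have hg : ∀ s : ℝ, HasDerivAt g (fderiv ℝ f (u₁ + s • (v₁ - u₁)) (v₁ - u₁) -
      fderiv ℝ f (u₂ + s • (v₂ - u₂)) (v₂ - u₂)) s := fun s =>
    ((hf _).hasFDerivAt.comp_hasDerivAt s (hline u₁ v₁ s)).sub
      ((hf _).hasFDerivAt.comp_hasDerivAt s (hline u₂ v₂ s))
  have hmv : ‖g 1 - g 0‖ ≤ C * (1 - 0) :=
    norm_image_sub_le_of_norm_deriv_le_segment' (fun s _ => (hg s).hasDerivWithinAt) hC 1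
      (right_mem_Icc.mpr zero_le_one)
  have hg0 : g 0 = f u₁ - f u₂ := by simp [g]
  have hg1 : g 1 = f v₁ - f v₂ := by simp [g]
  rw [← hg0, ← hg1, norm_sub_rev]
  simpa using hmv

theorem norm_second_difference_le_of_holder_fderiv {f : E → F} (hf : Differentiable ℝ f)
    {K H α : ℝ} (hH : 0 ≤ H) (hα : 0 ≤ α)
    (hD : ∀ u, ‖fderiv ℝ f u‖ ≤ K)
    (hHolder : ∀ u v, ‖fderiv ℝ f u - fderiv ℝ f v‖ ≤ H * ‖u - v‖ ^ α)
    (u₁ u₂ v₁ v₂ : E) :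
    ‖f u₁ - f u₂ - (f v₁ - f v₂)‖ ≤
      K * ‖u₁ - u₂ - (v₁ - v₂)‖ + H * (‖u₁ - u₂‖ + ‖v₁ - v₂‖) ^ α * ‖u₂ - v₂‖ := by
  refine norm_second_difference_le_of_fderiv hf fun s hs => ?_
  set p := u₁ + s • (v₁ - u₁)
  set q := u₂ + s • (v₂ - u₂)
  have hdist : ‖p - q‖ ≤ ‖u₁ - u₂‖ + ‖v₁ - v₂‖ :=
    norm_segment_sub_segment_le u₁ u₂ v₁ v₂ (Ico_subset_Icc_self hs)
  have hdiff : ‖fderiv ℝ f p - fderiv ℝ f q‖ ≤ H * (‖u₁ - u₂‖ + ‖v₁ - v₂‖) ^ α :=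
    (hHolder p q).trans <| by gcongr
  have hw : v₁ - u₁ - (v₂ - u₂) = -(u₁ - u₂ - (v₁ - v₂)) := by abel
  calc ‖fderiv ℝ f p (v₁ - u₁) - fderiv ℝ f q (v₂ - u₂)‖
      ≤ ‖fderiv ℝ f p‖ * ‖v₁ - u₁ - (v₂ - u₂)‖ +
          ‖fderiv ℝ f p - fderiv ℝ f q‖ * ‖v₂ - u₂‖ :=
        ContinuousLinearMap.norm_apply_sub_apply_le _ _ _ _
    _ ≤ K * ‖u₁ - u₂ - (v₁ - v₂)‖ + H * (‖u₁ - u₂‖ + ‖v₁ - v₂‖) ^ α * ‖u₂ - v₂‖ := by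
        rw [hw, norm_neg, norm_sub_rev v₂]
        gcongr
        exact hD p

end SecondDifference

theorem lip_beta_difference_estimate_general
    {U : Type*} [NormedAddCommGroup U] [NormedSpace ℝ U]
    (β : ℝ) (hβ1 : 1 < β)
    (f₁ f₂ : U → U) (K ε : ℝ) (hε : 0 ≤ ε)
    (hd₁ : Differentiable ℝ f₁)
    (hD₁ : ∀ u, ‖fderiv ℝ f₁ u‖ ≤ K)
    (hH₁ : ∀ u v, ‖fderiv ℝ f₁ u - fderiv ℝ f₁ v‖ ≤ K * ‖u - v‖ ^ (β - 1))
    (hdiffH : ∀ u v, ‖f₁ u - f₂ u - (f₁ v - f₂ v)‖ ≤ ε * ‖u - v‖ ^ (β - 1)) :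
    ∀ u₁ u₂ v₁ v₂ : U,
      ‖f₁ u₁ - f₁ u₂ - (f₂ v₁ - f₂ v₂)‖ ≤
        K * ‖u₁ - u₂ - (v₁ - v₂)‖ +
          (‖u₁ - u₂‖ + ‖v₁ - v₂‖) ^ (β - 1) * (K * ‖u₂ - v₂‖ + ε) := by
  intro u₁ u₂ v₁ v₂
  have hα : 0 ≤ β - 1 := by linarith
  have hK : 0 ≤ K := (norm_nonneg _).trans (hD₁ 0)
  have hsecond := norm_second_difference_le_of_holder_fderiv hd₁ hK hα hD₁ hH₁ u₁ u₂ v₁ v₂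
  have hgap : ‖f₁ v₁ - f₂ v₁ - (f₁ v₂ - f₂ v₂)‖ ≤ ε * (‖u₁ - u₂‖ + ‖v₁ - v₂‖) ^ (β - 1) :=
    (hdiffH v₁ v₂).trans <| by gcongr; exact le_add_of_nonneg_left (norm_nonneg _)
  have hsplit : f₁ u₁ - f₁ u₂ - (f₂ v₁ - f₂ v₂)
      = (f₁ u₁ - f₁ u₂ - (f₁ v₁ - f₁ v₂)) + (f₁ v₁ - f₂ v₁ - (f₁ v₂ - f₂ v₂)) := by abel
  rw [hsplit]
  linarith [norm_add_le (f₁ u₁ - f₁ u₂ - (f₁ v₁ - f₁ v₂)) (f₁ v₁ - f₂ v₁ - (f₁ v₂ - f₂ v₂))]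

theorem lip_beta_difference_estimate
    {U : Type*} [NormedAddCommGroup U] [NormedSpace ℝ U]
    (β : ℝ) (hβ1 : 1 < β) (hβ2 : β ≤ 2)
    (f₁ f₂ : U → U) (K ε : ℝ) (hK : 0 ≤ K) (hε : 0 ≤ ε)
    (hd₁ : Differentiable ℝ f₁) (hd₂ : Differentiable ℝ f₂)
    (hb₁ : ∀ u, ‖f₁ u‖ ≤ K)
    (hD₁ : ∀ u, ‖fderiv ℝ f₁ u‖ ≤ K)
    (hH₁ : ∀ u v, ‖fderiv ℝ f₁ u - fderiv ℝ f₁ v‖ ≤ K * ‖u - v‖ ^ (β - 1))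
    (hdiff0 : ∀ u, ‖f₁ u - f₂ u‖ ≤ ε)
    (hdiffH : ∀ u v, ‖f₁ u - f₂ u - (f₁ v - f₂ v)‖ ≤ ε * ‖u - v‖ ^ (β - 1)) :
    ∀ u₁ u₂ v₁ v₂ : U,
      ‖f₁ u₁ - f₁ u₂ - (f₂ v₁ - f₂ v₂)‖ ≤
        K * ‖u₁ - u₂ - (v₁ - v₂)‖ +
          (‖u₁ - u₂‖ + ‖v₁ - v₂‖) ^ (β - 1) * (K * ‖u₂ - v₂‖ + ε) :=
  lip_beta_difference_estimate_general β hβ1 f₁ f₂ K ε hε hd₁ hD₁ hH₁ hdiffH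
end

section
/- Let ω be a control on [0,T] (continuous, vanishing on the diagonal, superadditive: ω(s,u)+ω(u,t) ≤ ω(s,t) for s ≤ u ≤ t). For α ∈ (0,1], define ω^α(s,t) := sup over partitions D = {t_j} of [s,t] with ω(t_j, t_{j+1}) ≤ α for all j, of Σ_j ω(t_j, t_{j+1}). Then ω^α is itself a control: it is superadditive, monotone in the interval, and vanishes on the diagonal. -/
/-!
Gluing an admissible partition of `[s,u]` to one of `[u,t]` gives an admissible partition
of `[s,t]`, so `ω^α` is superadditive as soon as the three suprema are taken over nonempty
sets that are bounded above. Superadditivity of `ω` bounds every partition sum over `[s,t]`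
by `ω(s,t)`, and uniform continuity of `ω` near the diagonal makes every sufficiently fine
partition admissible. Monotonicity then follows from superadditivity and `ω^α ≥ 0`, and on
the diagonal the only partition sum is `0`.
-/

noncomputable section
open scoped BigOperators

/-- sums of `ω` over partitions of `[s,t]` all of whose pieces have `ω`-size `≤ α` -/
def partSums (ω : ℝ → ℝ → ℝ) (α s t : ℝ) : Set ℝ :=
  {x | ∃ (n : ℕ) (u : Fin (n + 1) → ℝ), Monotone u ∧ u 0 = s ∧ u (Fin.last n) = t ∧
      (∀ i : Fin n, ω (u i.castSucc) (u i.succ) ≤ α) ∧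
      x = ∑ i : Fin n, ω (u i.castSucc) (u i.succ)}

/-- the truncated control `ω^α` -/
def omegaTrunc (ω : ℝ → ℝ → ℝ) (α s t : ℝ) : ℝ := sSup (partSums ω α s t)

open Finset Set

structure IsControl (T : ℝ) (ω : ℝ → ℝ → ℝ) : Prop where
  continuous : Continuous fun q : ℝ × ℝ => ω q.1 q.2
  nonneg : ∀ s t, 0 ≤ ω s t
  diag : ∀ s, ω s s = 0
  superadditive : ∀ s u t, 0 ≤ s → s ≤ u → u ≤ t → t ≤ T → ω s u + ω u t ≤ ω s t

section PartSums

variable {ω : ℝ → ℝ → ℝ} {α s t x : ℝ}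

/-- Partitions indexed by `ℕ`, extended constantly beyond the last point. -/
theorem mem_partSums_iff : x ∈ partSums ω α s t ↔
    ∃ (n : ℕ) (u : ℕ → ℝ), Monotone u ∧ u 0 = s ∧ u n = t ∧
      (∀ k < n, ω (u k) (u (k + 1)) ≤ α) ∧ x = ∑ k ∈ range n, ω (u k) (u (k + 1)) := by
  constructor
  · rintro ⟨n, u, hu, h0, hn, hstep, rfl⟩
    have hclamp : ∀ k (hk : k < n + 1), Fin.clamp k n = ⟨k, hk⟩ :=
      fun k hk => Fin.ext (min_eq_left (by omega))
    refine ⟨n, fun k => u (Fin.clamp k n), hu.comp Fin.clamp_monotone, h0,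
      (congrArg u (Fin.clamp_eq_last n n le_rfl)).trans hn, fun k hk => ?_, ?_⟩
    · dsimp only
      rw [hclamp k (by omega), hclamp (k + 1) (by omega)]
      exact hstep ⟨k, hk⟩
    · rw [← Fin.sum_univ_eq_sum_range fun k => ω (u (Fin.clamp k n)) (u (Fin.clamp (k + 1) n))]
      refine sum_congr rfl fun i _ => ?_
      rw [hclamp i (by omega), hclamp (i + 1) (by omega)]
      rfl
  · rintro ⟨n, u, hu, h0, hn, hstep, rfl⟩
    exact ⟨n, fun i => u i, fun _ _ h => hu h, h0, hn, fun i => hstep i i.isLt,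
      (Fin.sum_univ_eq_sum_range (fun k => ω (u k) (u (k + 1))) n).symm⟩

theorem add_mem_partSums {r y : ℝ} (hx : x ∈ partSums ω α r s) (hy : y ∈ partSums ω α s t) :
    x + y ∈ partSums ω α r t := by
  obtain ⟨m, u, hu, hu0, hum, hustep, rfl⟩ := mem_partSums_iff.1 hx
  obtain ⟨n, v, hv, hv0, hvn, hvstep, rfl⟩ := mem_partSums_iff.1 hy
  -- `u` frozen after step `m` plus `v` delayed by `m` steps: monotone as a sum of monotone maps
  set w : ℕ → ℝ := fun k => u (min k m) + (v (k - m) - v 0)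
  have hw_left : ∀ k ≤ m, w k = u k := fun k hk => by
    simp [w, min_eq_left hk, Nat.sub_eq_zero_of_le hk]
  have hw_right : ∀ j, w (m + j) = v j := fun j => by simp [w, hum, hv0]
  refine mem_partSums_iff.2 ⟨m + n, w, ?_, by rw [hw_left 0 m.zero_le, hu0],
    by rw [hw_right, hvn], fun k hk => ?_, ?_⟩
  · exact (hu.comp fun _ _ h => min_le_min_right m h).add
      ((hv.comp fun _ _ h => Nat.sub_le_sub_right h m).add_const _)
  · rcases lt_or_ge k m with hkm | hkm
    · rw [hw_left k hkm.le, hw_left (k + 1) hkm]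
      exact hustep k hkm
    · obtain ⟨j, rfl⟩ := Nat.exists_eq_add_of_le hkm
      rw [hw_right, show w (m + j + 1) = v (j + 1) from hw_right (j + 1)]
      exact hvstep j (by omega)
  · rw [sum_range_add]
    congr 1
    · exact sum_congr rfl fun k hk => by
        rw [hw_left k (mem_range.1 hk).le, hw_left (k + 1) (mem_range.1 hk)]
    · exact sum_congr rfl fun j _ => by
        rw [hw_right, show w (m + j + 1) = v (j + 1) from hw_right (j + 1)]

theorem nonneg_of_mem_partSums (hnonneg : ∀ s t, 0 ≤ ω s t) (hx : x ∈ partSums ω α s t) :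
    0 ≤ x := by
  obtain ⟨n, u, -, -, -, -, rfl⟩ := hx
  exact sum_nonneg fun i _ => hnonneg _ _

theorem omegaTrunc_nonneg (hnonneg : ∀ s t, 0 ≤ ω s t) (s t : ℝ) : 0 ≤ omegaTrunc ω α s t :=
  Real.sSup_nonneg fun _ hx => nonneg_of_mem_partSums hnonneg hx

theorem zero_mem_partSums_self : (0 : ℝ) ∈ partSums ω α s s :=
  ⟨0, fun _ => s, monotone_const, rfl, rfl, fun i => i.elim0, by simp⟩

theorem partSums_self (hdiag : ∀ s, ω s s = 0) : partSums ω α s s = {0} := by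
  refine Subset.antisymm ?_ (singleton_subset_iff.2 zero_mem_partSums_self)
  rintro x ⟨n, u, hu, h0, hn, -, rfl⟩
  have hconst : ∀ i, u i = s :=
    fun i => le_antisymm (hn ▸ hu (Fin.le_last i)) (h0 ▸ hu (Fin.zero_le i))
  simp [hconst, hdiag]

theorem omegaTrunc_self (hdiag : ∀ s, ω s s = 0) (s : ℝ) : omegaTrunc ω α s s = 0 := by
  rw [omegaTrunc, partSums_self hdiag, csSup_singleton]

theorem sum_range_le_of_superadditive {T : ℝ} (hnonneg : ∀ s t, 0 ≤ ω s t)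
    (hsuper : ∀ s u t, 0 ≤ s → s ≤ u → u ≤ t → t ≤ T → ω s u + ω u t ≤ ω s t)
    {u : ℕ → ℝ} (hu : Monotone u) (hu0 : 0 ≤ u 0) (n : ℕ) (hn : u n ≤ T) :
    ∑ k ∈ range n, ω (u k) (u (k + 1)) ≤ ω (u 0) (u n) := by
  induction n with
  | zero => simpa using hnonneg (u 0) (u 0)
  | succ n ih =>
    rw [sum_range_succ]
    linarith [ih ((hu n.le_succ).trans hn),
      hsuper (u 0) (u n) (u (n + 1)) hu0 (hu n.zero_le) (hu n.le_succ) hn]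

theorem bddAbove_partSums {T : ℝ} (hnonneg : ∀ s t, 0 ≤ ω s t)
    (hsuper : ∀ s u t, 0 ≤ s → s ≤ u → u ≤ t → t ≤ T → ω s u + ω u t ≤ ω s t)
    (hs : 0 ≤ s) (ht : t ≤ T) : BddAbove (partSums ω α s t) := by
  refine ⟨ω s t, fun x hx => ?_⟩
  obtain ⟨n, u, hu, rfl, rfl, -, rfl⟩ := mem_partSums_iff.1 hx
  exact sum_range_le_of_superadditive hnonneg hsuper hu hs n ht

theorem exists_pos_forall_dist_lt_imp_lt (hcont : Continuous fun q : ℝ × ℝ => ω q.1 q.2)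
    (hdiag : ∀ s, ω s s = 0) {a b ε : ℝ} (hε : 0 < ε) :
    ∃ δ > 0, ∀ x ∈ Icc a b, ∀ y ∈ Icc a b, dist x y < δ → ω x y < ε := by
  obtain ⟨δ, hδ, hclose⟩ := Metric.uniformContinuousOn_iff.1
    ((isCompact_Icc.prod isCompact_Icc).uniformContinuousOn_of_continuous hcont.continuousOn) ε hε
  refine ⟨δ, hδ, fun x hx y hy hxy => ?_⟩
  have h := hclose (x, y) ⟨hx, hy⟩ (x, x) ⟨hx, hx⟩ (by simpa [Prod.dist_eq, dist_comm] using hxy)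
  rw [Real.dist_eq, hdiag, sub_zero] at h
  exact (le_abs_self _).trans_lt h

theorem partSums_nonempty (hα : 0 < α) (hcont : Continuous fun q : ℝ × ℝ => ω q.1 q.2)
    (hdiag : ∀ s, ω s s = 0) {a b : ℝ} (hab : a ≤ b) : (partSums ω α a b).Nonempty := by
  obtain ⟨δ, hδ, hsmall⟩ := exists_pos_forall_dist_lt_imp_lt (a := a) (b := b) hcont hdiag hα
  set u : ℕ → ℝ := fun k => min (a + k * (δ / 2)) b
  have hu : Monotone u := fun i j hij => min_le_min_right b (by gcongr)
  have hmem : ∀ k, u k ∈ Icc a b := fun k => ⟨le_min (le_add_of_nonneg_right (by positivity)) hab, min_le_right _ _⟩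
  have hstep : ∀ k, dist (u k) (u (k + 1)) < δ := fun k => calc
    dist (u k) (u (k + 1)) ≤ max |a + k * (δ / 2) - (a + ↑(k + 1) * (δ / 2))| |b - b| :=
      abs_min_sub_min_le_max _ _ _ _
    _ = δ / 2 := by
      rw [show a + k * (δ / 2) - (a + ↑(k + 1) * (δ / 2)) = -(δ / 2) by push_cast; ring,
        abs_neg, abs_of_pos (half_pos hδ), sub_self, abs_zero, max_eq_left (half_pos hδ).le]
    _ < δ := half_lt_self hδ
  have hlast : u ⌈(b - a) / (δ / 2)⌉₊ = b := by
    have h := Nat.le_ceil ((b - a) / (δ / 2))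
    rw [div_le_iff₀ (by positivity)] at h
    exact min_eq_right (by linarith)
  exact ⟨_, mem_partSums_iff.2 ⟨_, u, hu, by simp [u, hab], hlast,
    fun k _ => (hsmall _ (hmem k) _ (hmem (k + 1)) (hstep k)).le, rfl⟩⟩

end PartSums

namespace IsControl

variable {T : ℝ} {ω : ℝ → ℝ → ℝ} {α : ℝ}

theorem omegaTrunc_add_le (hω : IsControl T ω) (hα : 0 < α) {s u t : ℝ} (hs : 0 ≤ s)
    (hsu : s ≤ u) (hut : u ≤ t) (ht : t ≤ T) :
    omegaTrunc ω α s u + omegaTrunc ω α u t ≤ omegaTrunc ω α s t := by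
  have hne {a b : ℝ} (hab : a ≤ b) := partSums_nonempty hα hω.continuous hω.diag hab
  have hbdd {a b : ℝ} (ha : 0 ≤ a) (hb : b ≤ T) :=
    bddAbove_partSums (α := α) hω.nonneg hω.superadditive ha hb
  rw [omegaTrunc, omegaTrunc,
    ← csSup_add (hne hsu) (hbdd hs (hut.trans ht)) (hne hut) (hbdd (hs.trans hsu) ht)]
  exact csSup_le_csSup (hbdd hs ht) ((hne hsu).add (hne hut))
    (Set.add_subset_iff.2 fun _ hx _ hy => add_mem_partSums hx hy)

theorem omegaTrunc_mono (hω : IsControl T ω) (hα : 0 < α) {s s' t' t : ℝ} (hs : 0 ≤ s)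
    (hss' : s ≤ s') (hs't' : s' ≤ t') (ht't : t' ≤ t) (ht : t ≤ T) :
    omegaTrunc ω α s' t' ≤ omegaTrunc ω α s t := by
  have hleft := hω.omegaTrunc_add_le hα hs hss' (hs't'.trans ht't) ht
  have hright := hω.omegaTrunc_add_le hα (hs.trans hss') hs't' ht't ht
  linarith [omegaTrunc_nonneg (α := α) hω.nonneg s s', omegaTrunc_nonneg (α := α) hω.nonneg t' t]

end IsControl

theorem omega_alpha_is_control_general (T : ℝ) (ω : ℝ → ℝ → ℝ)
    (α : ℝ) (hα0 : 0 < α)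
    (hcont : Continuous fun q : ℝ × ℝ => ω q.1 q.2)
    (hnonneg : ∀ s t, 0 ≤ ω s t)
    (hdiag : ∀ s, ω s s = 0)
    (hsuper : ∀ s u t, 0 ≤ s → s ≤ u → u ≤ t → t ≤ T → ω s u + ω u t ≤ ω s t) :
    (∀ s u t, 0 ≤ s → s ≤ u → u ≤ t → t ≤ T →
        omegaTrunc ω α s u + omegaTrunc ω α u t ≤ omegaTrunc ω α s t) ∧
    (∀ s s' t' t, 0 ≤ s → s ≤ s' → s' ≤ t' → t' ≤ t → t ≤ T →
        omegaTrunc ω α s' t' ≤ omegaTrunc ω α s t) ∧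
    (∀ s, 0 ≤ s → s ≤ T → omegaTrunc ω α s s = 0) := by
  have hω : IsControl T ω := ⟨hcont, hnonneg, hdiag, hsuper⟩
  exact ⟨fun _ _ _ hs hsu hut ht => hω.omegaTrunc_add_le hα0 hs hsu hut ht,
    fun _ _ _ _ hs hss' hs't' ht't ht => hω.omegaTrunc_mono hα0 hs hss' hs't' ht't ht,
    fun s _ _ => omegaTrunc_self hdiag s⟩

/-- `ω^α` is a control: superadditive, monotone, zero on the
diagonal. -/
theorem omega_alpha_is_control (T : ℝ) (hT : 0 ≤ T) (ω : ℝ → ℝ → ℝ)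
    (α : ℝ) (hα0 : 0 < α) (hα1 : α ≤ 1)
    (hcont : Continuous fun q : ℝ × ℝ => ω q.1 q.2)
    (hnonneg : ∀ s t, 0 ≤ ω s t)
    (hdiag : ∀ s, ω s s = 0)
    (hsuper : ∀ s u t, 0 ≤ s → s ≤ u → u ≤ t → t ≤ T → ω s u + ω u t ≤ ω s t) :
    (∀ s u t, 0 ≤ s → s ≤ u → u ≤ t → t ≤ T →
        omegaTrunc ω α s u + omegaTrunc ω α u t ≤ omegaTrunc ω α s t) ∧
    (∀ s s' t' t, 0 ≤ s → s ≤ s' → s' ≤ t' → t' ≤ t → t ≤ T →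
        omegaTrunc ω α s' t' ≤ omegaTrunc ω α s t) ∧
    (∀ s, 0 ≤ s → s ≤ T → omegaTrunc ω α s s = 0) :=
  omega_alpha_is_control_general T ω α hα0 hcont hnonneg hdiag hsuper

end
end

section
/- (Decomposition into dyadic intervals) With the nested dyadic partitions Λ(n) of [0,T] adapted to a control ω as above, for any pair s < t in Λ(n), let n₀ be the minimal level of a dyadic interval contained in [s,t]. Then [s,t] can be written as a finite union of dyadic intervals in such a way that there is a dyadic point u ∈ [s,t] of level n₀−1 with: the levels of the dyadic intervals forming [s,u] strictly decrease reading left to right and the levels of the dyadic intervals forming [u,t] strictly increase reading left to right; moreover for the decomposition [u,t] = ∪_{j=0}^{l−1}[t_j, t_{j+1}], one has ω(t_j, t_{j+1}) ≤ 2^{−j} ω(u,t) for each j. -/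
/-!
Statement 11 (decomposition into dyadic intervals): with the nested dyadic
partitions `Λ(n)` of `[0,T]` adapted to a control `ω`, for any pair `s < t` of
points of `Λ(n)`, letting `n₀` be the minimal level of a dyadic interval
contained in `[s,t]`, the interval `[s,t]` decomposes as a union of dyadic
intervals around a dyadic point `u` of level `n₀ − 1`: the levels of the
intervals forming `[s,u]` strictly decrease from left to right, those forming
`[u,t]` strictly increase, and the pieces `[t_j, t_{j+1}]` of `[u,t]` satisfy
`ω(t_j,t_{j+1}) ≤ 2^{−j} ω(u,t)`.
-/

/-- `x` is a dyadic point of level `m` -/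
def IsDyadicPt (Λ : ℕ → ℕ → ℝ) (m : ℕ) (x : ℝ) : Prop :=
  ∃ j ≤ 2 ^ m, Λ m j = x

/-- `[a,b]` is a dyadic interval of level `m` -/
def IsDyadicInt (Λ : ℕ → ℕ → ℝ) (m : ℕ) (a b : ℝ) : Prop :=
  ∃ j < 2 ^ m, Λ m j = a ∧ Λ m (j + 1) = b


private def Feas (Λ : ℕ → ℕ → ℝ) (n : ℕ) (t : ℝ) (q m : ℕ) : Prop :=
  m ≤ n ∧ 2 ^ (n - m) ∣ q ∧ q + 2 ^ (n - m) ≤ 2 ^ n ∧ Λ n (q + 2 ^ (n - m)) ≤ t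

private def FeasL (Λ : ℕ → ℕ → ℝ) (n : ℕ) (s : ℝ) (q m : ℕ) : Prop :=
  m ≤ n ∧ 2 ^ (n - m) ∣ q ∧ 2 ^ (n - m) ≤ q ∧ s ≤ Λ n (q - 2 ^ (n - m))

private lemma lam_refine (Λ : ℕ → ℕ → ℝ) (hnest : ∀ n j, Λ (n + 1) (2 * j) = Λ n j) :
    ∀ (d m j : ℕ), Λ (m + d) (2 ^ d * j) = Λ m j := by
  intro d
  induction d with
  | zero => intro m j; simp
  | succ d ih =>
    intro m j
    have h1 : 2 ^ (d + 1) * j = 2 * (2 ^ d * j) := by ring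
    have h2 : m + (d + 1) = (m + d) + 1 := rfl
    rw [h1, h2, hnest (m + d) (2 ^ d * j), ih]

private lemma lam_eq (Λ : ℕ → ℕ → ℝ) (hnest : ∀ n j, Λ (n + 1) (2 * j) = Λ n j)
    {n m : ℕ} (hm : m ≤ n) (j : ℕ) : Λ m j = Λ n (2 ^ (n - m) * j) := by
  have h := lam_refine Λ hnest (n - m) m j
  rw [Nat.add_sub_cancel' hm] at h
  exact h.symm

private lemma lam_zero (Λ : ℕ → ℕ → ℝ) (h00 : Λ 0 0 = 0)
    (hnest : ∀ n j, Λ (n + 1) (2 * j) = Λ n j) (n : ℕ) : Λ n 0 = 0 := by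
  have h := lam_eq Λ hnest (Nat.zero_le n) 0
  simp at h
  rw [← h]; exact h00

private lemma lam_top (Λ : ℕ → ℕ → ℝ) (T : ℝ) (h01 : Λ 0 1 = T)
    (hnest : ∀ n j, Λ (n + 1) (2 * j) = Λ n j) (n : ℕ) : Λ n (2 ^ n) = T := by
  have h := lam_eq Λ hnest (Nat.zero_le n) 1
  simp at h
  rw [← h]; exact h01

private lemma monoChain (Λ : ℕ → ℕ → ℝ)
    (hmono : ∀ n j, j < 2 ^ n → Λ n j ≤ Λ n (j + 1)) (n : ℕ) :
    ∀ (k j : ℕ), j ≤ k → k ≤ 2 ^ n → Λ n j ≤ Λ n k := by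
  intro k
  induction k with
  | zero =>
    intro j h1 _
    have : j = 0 := by omega
    rw [this]
  | succ k ih =>
    intro j h1 h2
    rcases Nat.lt_or_ge j (k + 1) with h | h
    · exact (ih j (by omega) (by omega)).trans (hmono n k (by omega))
    · have : j = k + 1 := by omega
      rw [this]

private lemma isDyadicInt_of_index (Λ : ℕ → ℕ → ℝ)
    (hnest : ∀ n j, Λ (n + 1) (2 * j) = Λ n j)
    (n m q : ℕ) (hm : m ≤ n) (hdvd : 2 ^ (n - m) ∣ q) (hq : q + 2 ^ (n - m) ≤ 2 ^ n) :
    IsDyadicInt Λ m (Λ n q) (Λ n (q + 2 ^ (n - m))) := by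
  obtain ⟨p, hp⟩ := hdvd
  have hpow : (2 : ℕ) ^ n = 2 ^ m * 2 ^ (n - m) := by rw [← pow_add]; congr 1; omega
  have h1 : (p + 1) * 2 ^ (n - m) ≤ 2 ^ m * 2 ^ (n - m) := by
    rw [← hpow]
    calc (p + 1) * 2 ^ (n - m) = q + 2 ^ (n - m) := by rw [hp]; ring
      _ ≤ 2 ^ n := hq
  have hplt : p < 2 ^ m := by
    have := Nat.le_of_mul_le_mul_right h1 (Nat.two_pow_pos _)
    omega
  refine ⟨p, hplt, ?_, ?_⟩
  · rw [hp]; exact lam_eq Λ hnest hm p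
  · rw [lam_eq Λ hnest hm (p + 1)]
    congr 1
    rw [hp]; ring

private lemma halfstep (ω : ℝ → ℝ → ℝ) (Λ : ℕ → ℕ → ℝ)
    (hnest : ∀ n j, Λ (n + 1) (2 * j) = Λ n j)
    (hhalf : ∀ n j, j < 2 ^ n →
      ω (Λ (n + 1) (2 * j)) (Λ (n + 1) (2 * j + 1)) =
        ω (Λ (n + 1) (2 * j + 1)) (Λ (n + 1) (2 * j + 2)) ∧
      ω (Λ (n + 1) (2 * j)) (Λ (n + 1) (2 * j + 1)) ≤
        (1 / 2) * ω (Λ n j) (Λ n (j + 1)))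
    (n ν q : ℕ) (hν : ν + 1 ≤ n) (hdvd : 2 ^ (n - ν) ∣ q) (hq : q + 2 ^ (n - ν) ≤ 2 ^ n) :
    ω (Λ n q) (Λ n (q + 2 ^ (n - (ν + 1)))) ≤ 1 / 2 * ω (Λ n q) (Λ n (q + 2 ^ (n - ν))) := by
  obtain ⟨p, hp⟩ := hdvd
  have he1 : n - ν = (n - (ν + 1)) + 1 := by omega
  have hpow : (2 : ℕ) ^ n = 2 ^ ν * 2 ^ (n - ν) := by rw [← pow_add]; congr 1; omega
  have h1 : (p + 1) * 2 ^ (n - ν) ≤ 2 ^ ν * 2 ^ (n - ν) := by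
    rw [← hpow]
    calc (p + 1) * 2 ^ (n - ν) = q + 2 ^ (n - ν) := by rw [hp]; ring
      _ ≤ 2 ^ n := hq
  have hplt : p < 2 ^ ν := by
    have := Nat.le_of_mul_le_mul_right h1 (Nat.two_pow_pos _)
    omega
  have H := (hhalf ν p hplt).2
  have e1 : Λ (ν + 1) (2 * p) = Λ n q := by
    rw [lam_eq Λ hnest (by omega : ν + 1 ≤ n) (2 * p)]
    congr 1
    rw [hp, he1, pow_succ]; ring
  have e2 : Λ (ν + 1) (2 * p + 1) = Λ n (q + 2 ^ (n - (ν + 1))) := by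
    rw [lam_eq Λ hnest (by omega : ν + 1 ≤ n) (2 * p + 1)]
    congr 1
    rw [hp, he1, pow_succ]; ring
  have e3 : Λ ν p = Λ n q := by
    rw [lam_eq Λ hnest (by omega : ν ≤ n) p]
    congr 1
    rw [hp]
  have e4 : Λ ν (p + 1) = Λ n (q + 2 ^ (n - ν)) := by
    rw [lam_eq Λ hnest (by omega : ν ≤ n) (p + 1)]
    congr 1
    rw [hp]; ring
  rw [e1, e2, e3, e4] at H
  exact H

private lemma desc (ω : ℝ → ℝ → ℝ) (Λ : ℕ → ℕ → ℝ)
    (hnonneg : ∀ s t, 0 ≤ ω s t)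
    (hnest : ∀ n j, Λ (n + 1) (2 * j) = Λ n j)
    (hhalf : ∀ n j, j < 2 ^ n →
      ω (Λ (n + 1) (2 * j)) (Λ (n + 1) (2 * j + 1)) =
        ω (Λ (n + 1) (2 * j + 1)) (Λ (n + 1) (2 * j + 2)) ∧
      ω (Λ (n + 1) (2 * j)) (Λ (n + 1) (2 * j + 1)) ≤
        (1 / 2) * ω (Λ n j) (Λ n (j + 1))) :
    ∀ (d n μ q : ℕ), μ + d ≤ n → 2 ^ (n - μ) ∣ q → q + 2 ^ (n - μ) ≤ 2 ^ n →
      ω (Λ n q) (Λ n (q + 2 ^ (n - (μ + d)))) ≤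
        (1 / 2 : ℝ) ^ d * ω (Λ n q) (Λ n (q + 2 ^ (n - μ))) := by
  intro d
  induction d with
  | zero => intro n μ q h1 h2 h3; simp
  | succ d ih =>
    intro n μ q h1 h2 h3
    have hν : (μ + d) + 1 ≤ n := by omega
    have hdvdν : 2 ^ (n - (μ + d)) ∣ q := dvd_trans (pow_dvd_pow 2 (by omega)) h2
    have hqν : q + 2 ^ (n - (μ + d)) ≤ 2 ^ n := by
      have : (2:ℕ) ^ (n - (μ + d)) ≤ 2 ^ (n - μ) := Nat.pow_le_pow_right (by norm_num) (by omega)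
      omega
    have hstep := halfstep ω Λ hnest hhalf n (μ + d) q hν hdvdν hqν
    have hIH := ih n μ q (by omega) h2 h3
    have hnn : 0 ≤ ω (Λ n q) (Λ n (q + 2 ^ (n - (μ + d)))) := hnonneg _ _
    have em : μ + (d + 1) = (μ + d) + 1 := rfl
    calc ω (Λ n q) (Λ n (q + 2 ^ (n - (μ + (d + 1)))))
        = ω (Λ n q) (Λ n (q + 2 ^ (n - ((μ + d) + 1)))) := by rw [em]
      _ ≤ 1 / 2 * ω (Λ n q) (Λ n (q + 2 ^ (n - (μ + d)))) := hstep
      _ ≤ 1 / 2 * ((1 / 2) ^ d * ω (Λ n q) (Λ n (q + 2 ^ (n - μ)))) := by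
          exact mul_le_mul_of_nonneg_left hIH (by norm_num)
      _ = (1 / 2 : ℝ) ^ (d + 1) * ω (Λ n q) (Λ n (q + 2 ^ (n - μ))) := by ring

private lemma sibling (ω : ℝ → ℝ → ℝ) (Λ : ℕ → ℕ → ℝ)
    (hnest : ∀ n j, Λ (n + 1) (2 * j) = Λ n j)
    (hhalf : ∀ n j, j < 2 ^ n →
      ω (Λ (n + 1) (2 * j)) (Λ (n + 1) (2 * j + 1)) =
        ω (Λ (n + 1) (2 * j + 1)) (Λ (n + 1) (2 * j + 2)) ∧
      ω (Λ (n + 1) (2 * j)) (Λ (n + 1) (2 * j + 1)) ≤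
        (1 / 2) * ω (Λ n j) (Λ n (j + 1)))
    (n m q : ℕ) (hm1 : 1 ≤ m) (hmn : m ≤ n)
    (hdvd : 2 ^ (n - m + 1) ∣ q) (hq : q + 2 ^ (n - m) + 2 ^ (n - m) ≤ 2 ^ n) :
    ω (Λ n q) (Λ n (q + 2 ^ (n - m))) =
      ω (Λ n (q + 2 ^ (n - m))) (Λ n (q + 2 ^ (n - m) + 2 ^ (n - m))) := by
  obtain ⟨c, hc⟩ := hdvd
  have hclt : c < 2 ^ (m - 1) := by
    have hpow : (2 : ℕ) ^ n = 2 ^ (m - 1) * 2 ^ (n - m + 1) := by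
      rw [← pow_add]; congr 1; omega
    have h1 : (c + 1) * 2 ^ (n - m + 1) ≤ 2 ^ (m - 1) * 2 ^ (n - m + 1) := by
      rw [← hpow]
      calc (c + 1) * 2 ^ (n - m + 1) = q + 2 ^ (n - m + 1) := by rw [hc]; ring
        _ = q + 2 ^ (n - m) + 2 ^ (n - m) := by rw [pow_succ]; ring
        _ ≤ 2 ^ n := hq
    have := Nat.le_of_mul_le_mul_right h1 (Nat.two_pow_pos _)
    omega
  have H := (hhalf (m - 1) c hclt).1
  have hm' : m - 1 + 1 = m := by omega
  rw [hm'] at H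
  have e1 : Λ m (2 * c) = Λ n q := by
    rw [lam_eq Λ hnest hmn (2 * c)]
    congr 1
    rw [hc, pow_succ]; ring
  have e2 : Λ m (2 * c + 1) = Λ n (q + 2 ^ (n - m)) := by
    rw [lam_eq Λ hnest hmn (2 * c + 1)]
    congr 1
    rw [hc, pow_succ]; ring
  have e3 : Λ m (2 * c + 2) = Λ n (q + 2 ^ (n - m) + 2 ^ (n - m)) := by
    rw [lam_eq Λ hnest hmn (2 * c + 2)]
    congr 1
    rw [hc, pow_succ]; ring
  rw [e1, e2, e3] at H
  exact H

private lemma leftDecomp (Λ : ℕ → ℕ → ℝ)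
    (h00 : Λ 0 0 = 0)
    (hnest : ∀ n j, Λ (n + 1) (2 * j) = Λ n j)
    (hmono : ∀ n j, j < 2 ^ n → Λ n j ≤ Λ n (j + 1))
    (n : ℕ) (s : ℝ) (hsk : ∃ i, i ≤ 2 ^ n ∧ Λ n i = s) :
    ∀ (fuel q : ℕ), q ≤ fuel → q ≤ 2 ^ n → s ≤ Λ n q →
      (∀ m, FeasL Λ n s q m → m = 0 ∨ 2 ^ (n - m + 1) ∣ q) →
      ∃ (l : ℕ) (a : ℕ → ℝ) (lev : ℕ → ℕ),
        a 0 = s ∧ a l = Λ n q ∧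
        (∀ j < l, IsDyadicInt Λ (lev j) (a j) (a (j + 1))) ∧
        (∀ j, j + 1 < l → lev (j + 1) < lev j) ∧
        (0 < l → FeasL Λ n s q (lev (l - 1)) ∧
          a (l - 1) = Λ n (q - 2 ^ (n - lev (l - 1)))) := by
  intro fuel
  induction fuel with
  | zero =>
    intro q hqf hq2 hsq hinv
    have hq0 : q = 0 := Nat.le_zero.mp hqf
    subst hq0
    have h0 : Λ n 0 = 0 := lam_zero Λ h00 hnest n
    obtain ⟨i, hi, his⟩ := hsk
    have hs0 : (0:ℝ) ≤ s := by
      rw [← his, ← h0]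
      exact monoChain Λ hmono n i 0 (Nat.zero_le _) hi
    have hse : s = Λ n 0 := le_antisymm (by rw [h0] at hsq ⊢; exact hsq) (by rw [h0]; exact hs0)
    exact ⟨0, fun _ => s, fun _ => 0, rfl, hse,
      fun j hj => absurd hj (by omega),
      fun j hj => absurd hj (by omega),
      fun h => absurd h (lt_irrefl 0)⟩
  | succ fuel ih =>
    intro q hqf hq2 hsq hinv
    by_cases hstop : s = Λ n q
    · exact ⟨0, fun _ => s, fun _ => 0, rfl, hstop,
        fun j hj => absurd hj (by omega),
        fun j hj => absurd hj (by omega),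
        fun h => absurd h (lt_irrefl 0)⟩
    · have hlt : s < Λ n q := lt_of_le_of_ne hsq hstop
      obtain ⟨i, hi, his⟩ := hsk
      have hiq : i < q := by
        by_contra hcon
        push_neg at hcon
        have := monoChain Λ hmono n i q hcon hi
        rw [his] at this
        linarith
      classical
      have hfex : ∃ m, FeasL Λ n s q m := by
        refine ⟨n, le_rfl, ?_, ?_, ?_⟩
        · simp [Nat.sub_self]
        · simp [Nat.sub_self]; omega
        · have h1 : n - n = 0 := Nat.sub_self n
          rw [h1, pow_zero, ← his]
          exact monoChain Λ hmono n (q - 1) i (by omega) (by omega)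
      obtain ⟨m, hmf, hmmin⟩ : ∃ m, FeasL Λ n s q m ∧ ∀ m', FeasL Λ n s q m' → m ≤ m' :=
        ⟨Nat.find hfex, Nat.find_spec hfex, fun m' h => Nat.find_min' hfex h⟩
      obtain ⟨hmn, hdvd, hle, hs'⟩ := hmf
      obtain ⟨q', hq'⟩ : ∃ x, q - 2 ^ (n - m) = x := ⟨_, rfl⟩
      rw [hq'] at hs'
      have h2pm : 0 < 2 ^ (n - m) := Nat.two_pow_pos _
      have hkey : ∀ m'', FeasL Λ n s q' m'' → 1 ≤ m ∧ m < m'' := by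
        intro m'' hF
        obtain ⟨hm''n, hdvd'', hle'', hs''⟩ := hF
        have h2pos : 0 < 2 ^ (n - m'') := Nat.two_pow_pos _
        have hm1 : 1 ≤ m := by
          rcases Nat.eq_zero_or_pos m with hm0 | h
          · exfalso
            rw [hm0, Nat.sub_zero] at hq' hle
            omega
          · exact h
        refine ⟨hm1, ?_⟩
        by_contra hcon
        push_neg at hcon
        have hpow : (2:ℕ) ^ (n - m) ≤ 2 ^ (n - m'') := Nat.pow_le_pow_right (by norm_num) (by omega)
        have hdvd1 : 2 ^ (n - m + 1) ∣ q := by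
          rcases hinv m ⟨hmn, hdvd, hle, by rw [hq']; exact hs'⟩ with h | h
          · omega
          · exact h
        have hexp : n - (m - 1) = n - m + 1 := by omega
        have h2 : (2:ℕ) ^ (n - m + 1) = 2 ^ (n - m) * 2 := pow_succ 2 (n - m)
        have hfm1 : FeasL Λ n s q (m - 1) := by
          refine ⟨by omega, by rw [hexp]; exact hdvd1, ?_, ?_⟩
          · rw [hexp, h2]; omega
          · rw [hexp, h2]
            have e1 : q - 2 ^ (n - m) * 2 = q' - 2 ^ (n - m) := by omega
            rw [e1]
            exact hs''.trans (monoChain Λ hmono n (q' - 2 ^ (n - m)) (q' - 2 ^ (n - m'')) (by omega) (by omega))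
        have := hmmin _ hfm1
        omega
      have hinv' : ∀ m'', FeasL Λ n s q' m'' → m'' = 0 ∨ 2 ^ (n - m'' + 1) ∣ q' := by
        intro m'' hF
        have hm''n : m'' ≤ n := hF.1
        obtain ⟨hm1, hmm''⟩ := hkey m'' hF
        right
        have hq'dvd : 2 ^ (n - m) ∣ q' := by
          rw [← hq']
          exact Nat.dvd_sub hdvd dvd_rfl
        exact dvd_trans (pow_dvd_pow 2 (by omega : n - m'' + 1 ≤ n - m)) hq'dvd
      obtain ⟨l', a', lev', ha0, hal, hint, hdec, hchar⟩ :=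
        ih q' (by omega) (by omega) hs' hinv'
      refine ⟨l' + 1, fun j => if j ≤ l' then a' j else Λ n q,
        fun j => if j = l' then m else lev' j, ?_, ?_, ?_, ?_, ?_⟩
      · show (if (0:ℕ) ≤ l' then a' 0 else Λ n q) = s
        rw [if_pos (Nat.zero_le l')]
        exact ha0
      · show (if l' + 1 ≤ l' then a' (l' + 1) else Λ n q) = Λ n q
        rw [if_neg (by omega : ¬ l' + 1 ≤ l')]
      · intro j hj
        show IsDyadicInt Λ (if j = l' then m else lev' j)
          (if j ≤ l' then a' j else Λ n q) (if j + 1 ≤ l' then a' (j + 1) else Λ n q)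
        by_cases hjl : j = l'
        · rw [if_pos hjl, if_pos (by omega : j ≤ l'), if_neg (by omega : ¬ j + 1 ≤ l'), hjl, hal]
          have hrec := isDyadicInt_of_index Λ hnest n m q' hmn
            (by rw [← hq']; exact Nat.dvd_sub hdvd dvd_rfl) (by omega)
          have he : q' + 2 ^ (n - m) = q := by omega
          rwa [he] at hrec
        · rw [if_neg hjl, if_pos (by omega : j ≤ l'), if_pos (by omega : j + 1 ≤ l')]
          exact hint j (by omega)
      · intro j hj
        show (if j + 1 = l' then m else lev' (j + 1)) < (if j = l' then m else lev' j)
        by_cases hjl : j + 1 = l'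
        · rw [if_pos hjl, if_neg (by omega : ¬ j = l')]
          obtain ⟨hcf, _⟩ := hchar (by omega)
          have h2 := (hkey _ hcf).2
          have e : l' - 1 = j := by omega
          rw [e] at h2
          exact h2
        · rw [if_neg hjl, if_neg (by omega : ¬ j = l')]
          exact hdec j (by omega)
      · intro _
        simp only [Nat.add_sub_cancel, eq_self_iff_true, le_refl, if_true]
        exact ⟨⟨hmn, hdvd, hle, by rw [hq']; exact hs'⟩, by rw [hq']; exact hal⟩

private lemma rightDecomp (T : ℝ) (ω : ℝ → ℝ → ℝ) (Λ : ℕ → ℕ → ℝ)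
    (hnonneg : ∀ s t, 0 ≤ ω s t)
    (h01 : Λ 0 1 = T)
    (hnest : ∀ n j, Λ (n + 1) (2 * j) = Λ n j)
    (hmono : ∀ n j, j < 2 ^ n → Λ n j ≤ Λ n (j + 1))
    (hhalf : ∀ n j, j < 2 ^ n →
      ω (Λ (n + 1) (2 * j)) (Λ (n + 1) (2 * j + 1)) =
        ω (Λ (n + 1) (2 * j + 1)) (Λ (n + 1) (2 * j + 2)) ∧
      ω (Λ (n + 1) (2 * j)) (Λ (n + 1) (2 * j + 1)) ≤
        (1 / 2) * ω (Λ n j) (Λ n (j + 1)))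
    (n : ℕ) (t : ℝ) (htk : ∃ k, k ≤ 2 ^ n ∧ Λ n k = t) :
    ∀ (fuel q : ℕ), 2 ^ n - q ≤ fuel → q ≤ 2 ^ n → Λ n q ≤ t →
      (∀ m, Feas Λ n t q m → m = 0 ∨ 2 ^ (n - m + 1) ∣ q) →
      ∃ (r : ℕ) (b : ℕ → ℝ) (lev : ℕ → ℕ),
        b 0 = Λ n q ∧ b r = t ∧
        (∀ j < r, IsDyadicInt Λ (lev j) (b j) (b (j + 1))) ∧
        (∀ j, j + 1 < r → lev j < lev (j + 1)) ∧
        (∀ j < r, ω (b j) (b (j + 1)) ≤ (1 / 2 : ℝ) ^ j * ω (b 0) (b 1)) ∧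
        (0 < r → Feas Λ n t q (lev 0) ∧ b 1 = Λ n (q + 2 ^ (n - lev 0))) := by
  have hTtop : Λ n (2 ^ n) = T := lam_top Λ T h01 hnest n
  obtain ⟨k, hk, hkt⟩ := htk
  have htT : t ≤ T := by
    rw [← hkt, ← hTtop]
    exact monoChain Λ hmono n (2 ^ n) k hk le_rfl
  intro fuel
  induction fuel with
  | zero =>
    intro q hqf hq2 hqt hinv
    have hq0 : q = 2 ^ n := by omega
    have heq : Λ n q = t := by
      refine le_antisymm hqt ?_
      rw [hq0, hTtop]
      exact htT
    exact ⟨0, fun _ => t, fun _ => 0, heq.symm, rfl,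
      fun j hj => absurd hj (by omega),
      fun j hj => absurd hj (by omega),
      fun j hj => absurd hj (by omega),
      fun h => absurd h (lt_irrefl 0)⟩
  | succ fuel ih =>
    intro q hqf hq2 hqt hinv
    by_cases hstop : Λ n q = t
    · exact ⟨0, fun _ => t, fun _ => 0, hstop.symm, rfl,
        fun j hj => absurd hj (by omega),
        fun j hj => absurd hj (by omega),
        fun j hj => absurd hj (by omega),
        fun h => absurd h (lt_irrefl 0)⟩
    · have hlt : Λ n q < t := lt_of_le_of_ne hqt hstop
      have hqk : q < k := by
        by_contra h
        push_neg at h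
        have := monoChain Λ hmono n q k h hq2
        rw [hkt] at this
        linarith
      classical
      have hfex : ∃ m, Feas Λ n t q m := by
        refine ⟨n, le_rfl, ?_, ?_, ?_⟩
        · simp [Nat.sub_self]
        · simp [Nat.sub_self]; omega
        · have h1 : n - n = 0 := Nat.sub_self n
          rw [h1, pow_zero, ← hkt]
          exact monoChain Λ hmono n k (q + 1) (by omega) hk
      obtain ⟨m, hmf, hmmin⟩ : ∃ m, Feas Λ n t q m ∧ ∀ m', Feas Λ n t q m' → m ≤ m' :=
        ⟨Nat.find hfex, Nat.find_spec hfex, fun m' h => Nat.find_min' hfex h⟩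
      obtain ⟨hmn, hdvd, hle, ht'⟩ := hmf
      obtain ⟨q', hq'⟩ : ∃ x, q + 2 ^ (n - m) = x := ⟨_, rfl⟩
      rw [hq'] at hle ht'
      have h2pm : 0 < 2 ^ (n - m) := Nat.two_pow_pos _
      have hFqm : Feas Λ n t q m := ⟨hmn, hdvd, by omega, by rw [hq']; exact ht'⟩
      have hkey : ∀ m'', Feas Λ n t q' m'' → 1 ≤ m ∧ m < m'' := by
        intro m'' hF
        obtain ⟨hm''n, hdvd'', hle'', ht''⟩ := hF
        have h2pos : 0 < 2 ^ (n - m'') := Nat.two_pow_pos _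
        have hm1 : 1 ≤ m := by
          rcases Nat.eq_zero_or_pos m with hm0 | h
          · exfalso
            rw [hm0, Nat.sub_zero] at hq'
            omega
          · exact h
        refine ⟨hm1, ?_⟩
        by_contra hcon
        push_neg at hcon
        have hpow : (2:ℕ) ^ (n - m) ≤ 2 ^ (n - m'') := Nat.pow_le_pow_right (by norm_num) (by omega)
        have hdvd1 : 2 ^ (n - m + 1) ∣ q := by
          rcases hinv m hFqm with h | h
          · omega
          · exact h
        have hexp : n - (m - 1) = n - m + 1 := by omega
        have h2 : (2:ℕ) ^ (n - m + 1) = 2 ^ (n - m) * 2 := pow_succ 2 (n - m)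
        have hfm1 : Feas Λ n t q (m - 1) := by
          refine ⟨by omega, by rw [hexp]; exact hdvd1, ?_, ?_⟩
          · rw [hexp, h2]; omega
          · rw [hexp, h2]
            have e1 : q + 2 ^ (n - m) * 2 = q' + 2 ^ (n - m) := by omega
            rw [e1]
            calc Λ n (q' + 2 ^ (n - m)) ≤ Λ n (q' + 2 ^ (n - m'')) :=
                  monoChain Λ hmono n (q' + 2 ^ (n - m'')) (q' + 2 ^ (n - m)) (by omega) hle''
              _ ≤ t := ht''
        have := hmmin _ hfm1
        omega
      have hdvdm : 2 ^ (n - m) ∣ q' := by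
        rw [← hq']
        exact dvd_add hdvd dvd_rfl
      have hinv' : ∀ m'', Feas Λ n t q' m'' → m'' = 0 ∨ 2 ^ (n - m'' + 1) ∣ q' := by
        intro m'' hF
        have hm''n : m'' ≤ n := hF.1
        obtain ⟨hm1, hmm''⟩ := hkey m'' hF
        right
        exact dvd_trans (pow_dvd_pow 2 (by omega : n - m'' + 1 ≤ n - m)) hdvdm
      obtain ⟨r', b', lev', hb0, hbr, hint, hinc, hw, hchar⟩ :=
        ih q' (by omega) (by omega) ht' hinv'
      refine ⟨r' + 1, fun j => match j with | 0 => Λ n q | Nat.succ i => b' i,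
        fun j => match j with | 0 => m | Nat.succ i => lev' i, rfl, ?_, ?_, ?_, ?_, ?_⟩
      · exact hbr
      · intro j hj
        cases j with
        | zero =>
          show IsDyadicInt Λ m (Λ n q) (b' 0)
          rw [hb0, ← hq']
          exact isDyadicInt_of_index Λ hnest n m q hmn hdvd (by omega)
        | succ i => exact hint i (by omega)
      · intro j hj
        cases j with
        | zero =>
          have h0r : 0 < r' := by omega
          obtain ⟨hcf, hb1⟩ := hchar h0r
          exact (hkey _ hcf).2
        | succ i => exact hinc i (by omega)
      · intro j hj
        cases j with
        | zero =>
          show ω (Λ n q) (b' 0) ≤ (1 / 2 : ℝ) ^ 0 * ω (Λ n q) (b' 0)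
          simp
        | succ i =>
          have hir : i < r' := by omega
          have h0r : 0 < r' := by omega
          obtain ⟨hcf, hb1⟩ := hchar h0r
          obtain ⟨hm1, hmm'⟩ := hkey _ hcf
          obtain ⟨hm'n, hdvd', hle', ht''⟩ := hcf
          have hdvd1 : 2 ^ (n - m + 1) ∣ q := by
            rcases hinv m hFqm with h | h
            · omega
            · exact h
          -- q' + 2^(n-m) ≤ 2^n
          have hq'lt : q' + 2 ^ (n - m) ≤ 2 ^ n := by
            obtain ⟨e, he⟩ := hdvdm
            have hq'ltn : q' < 2 ^ n := by
              have := Nat.two_pow_pos (n - lev' 0)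
              omega
            have hpow : (2:ℕ) ^ n = 2 ^ m * 2 ^ (n - m) := by
              rw [← pow_add]; congr 1; omega
            have helt : e < 2 ^ m := by
              by_contra h
              push_neg at h
              have h3 : 2 ^ m * 2 ^ (n - m) ≤ e * 2 ^ (n - m) := Nat.mul_le_mul_right _ h
              rw [← hpow] at h3
              have h4 : e * 2 ^ (n - m) = 2 ^ (n - m) * e := Nat.mul_comm _ _
              omega
            calc q' + 2 ^ (n - m) = (e + 1) * 2 ^ (n - m) := by rw [he]; ring
              _ ≤ 2 ^ m * 2 ^ (n - m) := Nat.mul_le_mul_right _ (by omega)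
              _ = 2 ^ n := hpow.symm
          have hsib := sibling ω Λ hnest hhalf n m q hm1 hmn hdvd1 (by omega)
          rw [hq'] at hsib
          -- hsib : ω (Λ n q) (Λ n q') = ω (Λ n q') (Λ n (q' + 2^(n-m)))
          have hdesc := desc ω Λ hnonneg hnest hhalf (lev' 0 - m) n m q'
            (by omega) hdvdm hq'lt
          have em : m + (lev' 0 - m) = lev' 0 := by omega
          rw [em] at hdesc
          have hhalfpow : ((1:ℝ) / 2) ^ (lev' 0 - m) ≤ 1 / 2 := by
            calc ((1:ℝ) / 2) ^ (lev' 0 - m) ≤ (1 / 2 : ℝ) ^ 1 :=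
                  pow_le_pow_of_le_one (by norm_num) (by norm_num) (by omega)
              _ = 1 / 2 := pow_one _
          have hb'01 : ω (b' 0) (b' 1) ≤ 1 / 2 * ω (Λ n q) (b' 0) := by
            rw [hb0, hb1]
            calc ω (Λ n q') (Λ n (q' + 2 ^ (n - lev' 0)))
                ≤ (1 / 2 : ℝ) ^ (lev' 0 - m) * ω (Λ n q') (Λ n (q' + 2 ^ (n - m))) := hdesc
              _ ≤ 1 / 2 * ω (Λ n q') (Λ n (q' + 2 ^ (n - m))) :=
                  mul_le_mul_of_nonneg_right hhalfpow (hnonneg _ _)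
              _ = 1 / 2 * ω (Λ n q) (Λ n q') := by rw [← hsib]
          show ω (b' i) (b' (i + 1)) ≤ (1 / 2 : ℝ) ^ (i + 1) * ω (Λ n q) (b' 0)
          calc ω (b' i) (b' (i + 1)) ≤ (1 / 2 : ℝ) ^ i * ω (b' 0) (b' 1) := hw i hir
            _ ≤ (1 / 2 : ℝ) ^ i * (1 / 2 * ω (Λ n q) (b' 0)) :=
                mul_le_mul_of_nonneg_left hb'01 (by positivity)
            _ = (1 / 2 : ℝ) ^ (i + 1) * ω (Λ n q) (b' 0) := by ring
      · intro _
        refine ⟨hFqm, ?_⟩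
        show b' 0 = Λ n (q + 2 ^ (n - m))
        rw [hb0, hq']

theorem dyadic_decomposition (T : ℝ) (hT : 0 ≤ T) (ω : ℝ → ℝ → ℝ)
    (hnonneg : ∀ s t, 0 ≤ ω s t) (hdiag : ∀ s, ω s s = 0)
    (hsuper : ∀ s u t, 0 ≤ s → s ≤ u → u ≤ t → t ≤ T → ω s u + ω u t ≤ ω s t)
    (Λ : ℕ → ℕ → ℝ)
    (h00 : Λ 0 0 = 0) (h01 : Λ 0 1 = T)
    (hnest : ∀ n j, Λ (n + 1) (2 * j) = Λ n j)
    (hmono : ∀ n j, j < 2 ^ n → Λ n j ≤ Λ n (j + 1))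
    (hhalf : ∀ n j, j < 2 ^ n →
      ω (Λ (n + 1) (2 * j)) (Λ (n + 1) (2 * j + 1)) =
        ω (Λ (n + 1) (2 * j + 1)) (Λ (n + 1) (2 * j + 2)) ∧
      ω (Λ (n + 1) (2 * j)) (Λ (n + 1) (2 * j + 1)) ≤
        (1 / 2) * ω (Λ n j) (Λ n (j + 1)))
    (n n₀ : ℕ) (s t : ℝ)
    (hs : IsDyadicPt Λ n s) (ht : IsDyadicPt Λ n t) (hst : s < t)
    (hex : ∃ a b, IsDyadicInt Λ n₀ a b ∧ s ≤ a ∧ b ≤ t)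
    (hmin : ∀ m < n₀, ¬∃ a b, IsDyadicInt Λ m a b ∧ s ≤ a ∧ b ≤ t) :
    ∃ u : ℝ, s ≤ u ∧ u ≤ t ∧ IsDyadicPt Λ (n₀ - 1) u ∧
      (∃ (l : ℕ) (a : ℕ → ℝ) (lev : ℕ → ℕ), a 0 = s ∧ a l = u ∧
        (∀ j < l, IsDyadicInt Λ (lev j) (a j) (a (j + 1))) ∧
        (∀ j, j + 1 < l → lev (j + 1) < lev j)) ∧
      (∃ (r : ℕ) (b : ℕ → ℝ) (lev : ℕ → ℕ), b 0 = u ∧ b r = t ∧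
        (∀ j < r, IsDyadicInt Λ (lev j) (b j) (b (j + 1))) ∧
        (∀ j, j + 1 < r → lev j < lev (j + 1)) ∧
        (∀ j < r, ω (b j) (b (j + 1)) ≤ (1 / 2 : ℝ) ^ j * ω u t)) := by
  classical
  obtain ⟨iS, hiS, hiSs⟩ := hs
  obtain ⟨kT, hkT, hkTt⟩ := ht
  have hstT : t ≤ T := by
    rw [← hkTt, ← lam_top Λ T h01 hnest n]
    exact monoChain Λ hmono n (2 ^ n) kT hkT le_rfl
  have hs0 : (0:ℝ) ≤ s := by
    rw [← hiSs, ← lam_zero Λ h00 hnest n]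
    exact monoChain Λ hmono n iS 0 (Nat.zero_le _) hiS
  have hiSkT : iS < kT := by
    by_contra h
    push_neg at h
    have := monoChain Λ hmono n iS kT h hiS
    rw [hiSs, hkTt] at this
    linarith
  have hn0n : n₀ ≤ n := by
    by_contra hcon
    push_neg at hcon
    refine hmin n hcon ⟨s, Λ n (iS + 1), ⟨iS, by omega, hiSs, rfl⟩, le_rfl, ?_⟩
    rw [← hkTt]
    exact monoChain Λ hmono n kT (iS + 1) (by omega) hkT
  obtain ⟨aI, bI, ⟨j0, hj0, hja, hjb⟩, hsa, hbt⟩ := hex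
  have hab : Λ n₀ j0 ≤ Λ n₀ (j0 + 1) := hmono n₀ j0 hj0
  obtain ⟨jh, hjh2, hsjh, hjht, hjdvd⟩ :
      ∃ jh, jh ≤ 2 ^ (n₀ - 1) ∧ s ≤ Λ (n₀ - 1) jh ∧ Λ (n₀ - 1) jh ≤ t ∧
        2 ^ (n - n₀ + 1) ∣ 2 ^ (n - (n₀ - 1)) * jh := by
    rcases Nat.even_or_odd j0 with ⟨c, hc⟩ | ⟨c, hc⟩
    · -- j0 = c + c : u = left endpoint
      have hceil : c ≤ 2 ^ (n₀ - 1) := by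
        have hp : 0 < 2 ^ (n₀ - 1) := Nat.two_pow_pos _
        rcases Nat.eq_zero_or_pos n₀ with h0 | h1
        · rw [h0, pow_zero] at hj0; omega
        · have : (2:ℕ) ^ n₀ = 2 ^ (n₀ - 1) * 2 := by
            rw [← pow_succ]; congr 1; omega
          omega
      have heq : Λ (n₀ - 1) c = Λ n₀ j0 := by
        rcases Nat.eq_zero_or_pos n₀ with h0 | h1
        · have hj00 : j0 = 0 := by rw [h0, pow_zero] at hj0; omega
          have hc0 : c = 0 := by omega
          rw [h0, hj00, hc0]
        · have h2 : n₀ - 1 + 1 = n₀ := by omega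
          have hh := hnest (n₀ - 1) c
          rw [h2] at hh
          rw [← hh]
          congr 1
          omega
      refine ⟨c, hceil, by rw [heq, hja]; exact hsa, ?_, ?_⟩
      · rw [heq]
        exact hab.trans (by rw [hjb]; exact hbt)
      · rcases Nat.eq_zero_or_pos n₀ with h0 | h1
        · have hj00 : j0 = 0 := by rw [h0, pow_zero] at hj0; omega
          have hc0 : c = 0 := by omega
          simp [hc0]
        · have he : n - (n₀ - 1) = n - n₀ + 1 := by omega
          rw [he]
          exact dvd_mul_right _ _
    · -- j0 = 2 * c + 1 : u = right endpoint
      have hn₀1 : 1 ≤ n₀ := by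
        rcases Nat.eq_zero_or_pos n₀ with h0 | h1
        · rw [h0, pow_zero] at hj0; omega
        · exact h1
      have h2 : n₀ - 1 + 1 = n₀ := by omega
      have heq : Λ (n₀ - 1) (c + 1) = Λ n₀ (j0 + 1) := by
        have hh := hnest (n₀ - 1) (c + 1)
        rw [h2] at hh
        rw [← hh]
        congr 1
        omega
      have hceil : c + 1 ≤ 2 ^ (n₀ - 1) := by
        have hp : 0 < 2 ^ (n₀ - 1) := Nat.two_pow_pos _
        have : (2:ℕ) ^ n₀ = 2 ^ (n₀ - 1) * 2 := by
          rw [← pow_succ]; congr 1; omega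
        omega
      refine ⟨c + 1, hceil, ?_, by rw [heq, hjb]; exact hbt, ?_⟩
      · rw [heq]
        calc s ≤ aI := hsa
          _ = Λ n₀ j0 := hja.symm
          _ ≤ Λ n₀ (j0 + 1) := hab
      · have he : n - (n₀ - 1) = n - n₀ + 1 := by omega
        rw [he]
        exact dvd_mul_right _ _
  obtain ⟨uq, huq⟩ : ∃ x, 2 ^ (n - (n₀ - 1)) * jh = x := ⟨_, rfl⟩
  rw [huq] at hjdvd
  have hu_eq : Λ (n₀ - 1) jh = Λ n uq := by
    rw [← huq]
    exact lam_eq Λ hnest (by omega : n₀ - 1 ≤ n) jh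
  have huq2 : uq ≤ 2 ^ n := by
    rw [← huq]
    calc 2 ^ (n - (n₀ - 1)) * jh ≤ 2 ^ (n - (n₀ - 1)) * 2 ^ (n₀ - 1) :=
          Nat.mul_le_mul_left _ hjh2
      _ = 2 ^ n := by rw [← pow_add]; congr 1; omega
  have hinvR : ∀ m, Feas Λ n t uq m → m = 0 ∨ 2 ^ (n - m + 1) ∣ uq := by
    intro m hF
    obtain ⟨hmn, hdvd, hle, hΛ⟩ := hF
    right
    have hn₀m : n₀ ≤ m := by
      by_contra hcon
      push_neg at hcon
      exact hmin m hcon ⟨Λ n uq, Λ n (uq + 2 ^ (n - m)),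
        isDyadicInt_of_index Λ hnest n m uq hmn hdvd hle,
        by rw [← hu_eq]; exact hsjh, hΛ⟩
    exact dvd_trans (pow_dvd_pow 2 (by omega : n - m + 1 ≤ n - n₀ + 1)) hjdvd
  have hinvL : ∀ m, FeasL Λ n s uq m → m = 0 ∨ 2 ^ (n - m + 1) ∣ uq := by
    intro m hF
    obtain ⟨hmn, hdvd, hle, hΛ⟩ := hF
    right
    have hn₀m : n₀ ≤ m := by
      by_contra hcon
      push_neg at hcon
      refine hmin m hcon ⟨Λ n (uq - 2 ^ (n - m)), Λ n uq, ?_, hΛ, by rw [← hu_eq]; exact hjht⟩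
      have hded := isDyadicInt_of_index Λ hnest n m (uq - 2 ^ (n - m)) hmn
        (Nat.dvd_sub hdvd dvd_rfl) (by omega)
      rwa [Nat.sub_add_cancel hle] at hded
    exact dvd_trans (pow_dvd_pow 2 (by omega : n - m + 1 ≤ n - n₀ + 1)) hjdvd
  obtain ⟨l, a, alev, ha0, hal, haint, hadec, _⟩ :=
    leftDecomp Λ h00 hnest hmono n s ⟨iS, hiS, hiSs⟩ uq uq le_rfl huq2
      (by rw [← hu_eq]; exact hsjh) hinvL
  obtain ⟨r, b, blev, hb0, hbr, hbint, hbinc, hbw, hbchar⟩ :=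
    rightDecomp T ω Λ hnonneg h01 hnest hmono hhalf n t ⟨kT, hkT, hkTt⟩ (2 ^ n) uq
      (by omega) huq2 (by rw [← hu_eq]; exact hjht) hinvR
  refine ⟨Λ (n₀ - 1) jh, hsjh, hjht, ⟨jh, hjh2, rfl⟩,
    ⟨l, a, alev, ha0, by rw [hal, ← hu_eq], haint, hadec⟩,
    ⟨r, b, blev, by rw [hb0, ← hu_eq], hbr, hbint, hbinc, ?_⟩⟩
  intro j hj
  have h0r : 0 < r := by omega
  obtain ⟨⟨hmn', hdvd', hle', hΛ'⟩, hb1⟩ := hbchar h0r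
  have hub1 : Λ (n₀ - 1) jh ≤ b 1 := by
    rw [hb1, hu_eq]
    exact monoChain Λ hmono n (uq + 2 ^ (n - blev 0)) uq (by omega) hle'
  have hb1t : b 1 ≤ t := by rw [hb1]; exact hΛ'
  have h0u : (0:ℝ) ≤ Λ (n₀ - 1) jh := by
    rw [hu_eq, ← lam_zero Λ h00 hnest n]
    exact monoChain Λ hmono n uq 0 (Nat.zero_le _) huq2
  have hsup := hsuper (Λ (n₀ - 1) jh) (b 1) t h0u hub1 hb1t hstT
  have hω1 : ω (Λ (n₀ - 1) jh) (b 1) ≤ ω (Λ (n₀ - 1) jh) t := by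
    have := hnonneg (b 1) t
    linarith
  have hb0' : b 0 = Λ (n₀ - 1) jh := by rw [hb0, hu_eq]
  calc ω (b j) (b (j + 1)) ≤ (1 / 2 : ℝ) ^ j * ω (b 0) (b 1) := hbw j hj
    _ = (1 / 2 : ℝ) ^ j * ω (Λ (n₀ - 1) jh) (b 1) := by rw [hb0']
    _ ≤ (1 / 2 : ℝ) ^ j * ω (Λ (n₀ - 1) jh) t :=
        mul_le_mul_of_nonneg_left hω1 (by positivity)
end

section
/- If ω(s,t) ≥ 1 is a control value and a partition s = t_0 < ⋯ < t_n = t satisfies ω(t_j, t_{j+1}) = 1 for j = 0,…,n−2 and ω(t_{n−1}, t_n) ≤ 1, then n ≤ 2 ω(s,t). More generally, for α ∈ (0,1], if ω(t_j,t_{j+1}) = α for j = 0,…,m−2 and ω(t_{m−1},t_m) ≤ α, then m ≤ 2 α^{−1} ω^α(s,t), where ω^α is the α-truncated control sup_{partitions with ω(t_i,t_{i+1}) ≤ α} Σ ω(t_i,t_{i+1}). -/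
/-!
All but the last piece of the partition carry exactly `α`, so `(m - 1) α` is at most the sum of
`ω` over the pieces. That sum is at most `ω(s,t)` by superadditivity, and at most `ω^α(s,t)`
because the partition is admissible for the truncated control. Since `m ≤ 2 (m - 1)` once
`m ≥ 2` (and `n ≤ (n - 1) + ω(s,t)` when `ω(s,t) ≥ 1`), both bounds follow.
-/

noncomputable section
open scoped BigOperators

lemma Fin.natCast_mul_le_sum_of_eq_of_nonneg_last {k : ℕ} {f : Fin (k + 1) → ℝ} {a : ℝ}
    (heq : ∀ i : Fin (k + 1), (i : ℕ) < k → f i = a) (hlast : 0 ≤ f (Fin.last k)) :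
    k * a ≤ ∑ i, f i := by
  have hinit : ∑ i : Fin k, f i.castSucc = k * a := by
    simp [heq _ (Fin.castSucc_lt_last _)]
  rw [Fin.sum_univ_castSucc, hinit]
  linarith

section Superadditive

variable {T : ℝ} {ω : ℝ → ℝ → ℝ}

lemma sum_le_of_superadditive (hnonneg : ∀ s t, 0 ≤ ω s t)
    (hsuper : ∀ s u t, 0 ≤ s → s ≤ u → u ≤ t → t ≤ T → ω s u + ω u t ≤ ω s t) :
    ∀ {n : ℕ} (u : Fin (n + 1) → ℝ), Monotone u → 0 ≤ u 0 → u (Fin.last n) ≤ T →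
      ∑ i : Fin n, ω (u i.castSucc) (u i.succ) ≤ ω (u 0) (u (Fin.last n)) := by
  intro n
  induction n with
  | zero => intro u _ _ _; simpa using hnonneg (u 0) (u 0)
  | succ k ih =>
    intro u hu h0 hT
    have hinit := ih (fun i => u i.castSucc) (hu.comp Fin.strictMono_castSucc.monotone) h0
      ((hu (Fin.le_last _)).trans hT)
    have hsplit := hsuper (u 0) (u (Fin.last k).castSucc) (u (Fin.last (k + 1)))
      h0 (hu (Fin.zero_le _)) (hu (Fin.le_last _)) hT
    rw [Fin.sum_univ_castSucc, Fin.succ_last]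
    simp only [Fin.succ_castSucc, Fin.castSucc_zero] at hinit ⊢
    linarith

lemma partSums_bddAbove (hnonneg : ∀ s t, 0 ≤ ω s t)
    (hsuper : ∀ s u t, 0 ≤ s → s ≤ u → u ≤ t → t ≤ T → ω s u + ω u t ≤ ω s t)
    (α : ℝ) {s t : ℝ} (hs : 0 ≤ s) (ht : t ≤ T) : BddAbove (partSums ω α s t) := by
  refine ⟨ω s t, ?_⟩
  rintro x ⟨n, u, hu, rfl, rfl, -, rfl⟩
  exact sum_le_of_superadditive hnonneg hsuper u hu hs ht

end Superadditive

theorem partition_count_bound_general (T : ℝ) (ω : ℝ → ℝ → ℝ)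
    (hnonneg : ∀ s t, 0 ≤ ω s t)
    (hsuper : ∀ s u t, 0 ≤ s → s ≤ u → u ≤ t → t ≤ T → ω s u + ω u t ≤ ω s t) :
    (∀ s t, 0 ≤ s → s ≤ t → t ≤ T → 1 ≤ ω s t →
      ∀ (n : ℕ) (u : Fin (n + 1) → ℝ), Monotone u → u 0 = s → u (Fin.last n) = t →
        (∀ i : Fin n, (i : ℕ) < n - 1 → ω (u i.castSucc) (u i.succ) = 1) →
        (∀ i : Fin n, (i : ℕ) = n - 1 → ω (u i.castSucc) (u i.succ) ≤ 1) →
        (n : ℝ) ≤ 2 * ω s t) ∧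
    (∀ α : ℝ, 0 < α → α ≤ 1 → ∀ s t, 0 ≤ s → s ≤ t → t ≤ T →
      ∀ m : ℕ, 2 ≤ m →
      ∀ u : Fin (m + 1) → ℝ, Monotone u → u 0 = s → u (Fin.last m) = t →
        (∀ i : Fin m, (i : ℕ) < m - 1 → ω (u i.castSucc) (u i.succ) = α) →
        (∀ i : Fin m, (i : ℕ) = m - 1 → ω (u i.castSucc) (u i.succ) ≤ α) →
        (m : ℝ) ≤ 2 * α⁻¹ * omegaTrunc ω α s t) := by
  constructor
  · rintro s t hs - ht hω (_ | k) u hu rfl rfl hint -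
    · simp only [CharP.cast_eq_zero]; linarith
    have hcount := Fin.natCast_mul_le_sum_of_eq_of_nonneg_last (a := 1)
      (fun i hi => hint i (by omega)) (hnonneg _ _)
    have hsum := sum_le_of_superadditive hnonneg hsuper u hu hs ht
    push_cast
    linarith
  · rintro α hα - s t hs - ht m hm u hu rfl rfl hint hlast
    obtain ⟨k, rfl⟩ : ∃ k, m = k + 1 := ⟨m - 1, by omega⟩
    have hpiece : ∀ i : Fin (k + 1), ω (u i.castSucc) (u i.succ) ≤ α := fun i =>
      (lt_or_eq_of_le (Nat.le_sub_one_of_lt i.isLt)).elim (fun h => (hint i h).le) (hlast i)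
    have hcount := Fin.natCast_mul_le_sum_of_eq_of_nonneg_last (fun i hi => hint i (by omega))
      (hnonneg _ _)
    have htrunc : (k : ℝ) * α ≤ omegaTrunc ω α (u 0) (u (Fin.last (k + 1))) :=
      hcount.trans <| le_csSup (partSums_bddAbove hnonneg hsuper α hs ht)
        ⟨k + 1, u, hu, rfl, rfl, hpiece, rfl⟩
    have hk : (1 : ℝ) ≤ k := by exact_mod_cast (by omega : 1 ≤ k)
    calc ((k + 1 : ℕ) : ℝ) ≤ 2 * k := by push_cast; linarith
      _ = 2 * α⁻¹ * (k * α) := by field_simp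
      _ ≤ 2 * α⁻¹ * omegaTrunc ω α (u 0) (u (Fin.last (k + 1))) := by gcongr

theorem partition_count_bound (T : ℝ) (hT : 0 ≤ T) (ω : ℝ → ℝ → ℝ)
    (hnonneg : ∀ s t, 0 ≤ ω s t) (hdiag : ∀ s, ω s s = 0)
    (hsuper : ∀ s u t, 0 ≤ s → s ≤ u → u ≤ t → t ≤ T → ω s u + ω u t ≤ ω s t) :
    (∀ s t, 0 ≤ s → s ≤ t → t ≤ T → 1 ≤ ω s t →
      ∀ (n : ℕ) (u : Fin (n + 1) → ℝ), Monotone u → u 0 = s → u (Fin.last n) = t →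
        (∀ i : Fin n, (i : ℕ) < n - 1 → ω (u i.castSucc) (u i.succ) = 1) →
        (∀ i : Fin n, (i : ℕ) = n - 1 → ω (u i.castSucc) (u i.succ) ≤ 1) →
        (n : ℝ) ≤ 2 * ω s t) ∧
    (∀ α : ℝ, 0 < α → α ≤ 1 → ∀ s t, 0 ≤ s → s ≤ t → t ≤ T →
      ∀ m : ℕ, 2 ≤ m →
      ∀ u : Fin (m + 1) → ℝ, Monotone u → u 0 = s → u (Fin.last m) = t →
        (∀ i : Fin m, (i : ℕ) < m - 1 → ω (u i.castSucc) (u i.succ) = α) →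
        (∀ i : Fin m, (i : ℕ) = m - 1 → ω (u i.castSucc) (u i.succ) ≤ α) →
        (m : ℝ) ≤ 2 * α⁻¹ * omegaTrunc ω α s t) :=
  partition_count_bound_general T ω hnonneg hsuper

end
end
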